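/- arXiv:1701.02425 — 5 statements merged into one kernel-verified Lean document; each statement's English description precedes it below -/
import Mathlib

section
/- For every real x with 0 ≤ x ≤ 0.04, one has ((1−3x)/2)·ln((1−3x)/2) + 2·((1−24x)/5)·ln((1−24x)/5) > 3·((1−15x)/4)·ln((1−15x)/4). -/
/-- For `0 < y ≤ 1`, `y^2 - 1 ≤ 2 * y * log y` (i.e. `log y ≥ (y - 1/y)/2`). -/
lemma key_lower {y : ℝ} (hy : 0 < y) (hy1 : y ≤ 1) :
    y ^ 2 - 1 ≤ 2 * y * Real.log y := by
  have hlog : Real.log y ≤ 0 := Real.log_nonpos hy.le hy1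
  have hs : Real.sinh (Real.log y) ≤ Real.log y := by
    have := Real.sinh_neg (Real.log y)
    have h2 : -Real.log y ≤ Real.sinh (-Real.log y) :=
      Real.self_le_sinh_iff.2 (by linarith)
    nlinarith [Real.sinh_neg (Real.log y)]
  rw [Real.sinh_log hy] at hs
  have hyne : y ≠ 0 := hy.ne'
  have : (y - y⁻¹) / 2 ≤ Real.log y := hs
  have h3 : y * ((y - y⁻¹) / 2) ≤ y * Real.log y :=
    mul_le_mul_of_nonneg_left this hy.le
  have hinv : y * y⁻¹ = 1 := mul_inv_cancel₀ hyne
  nlinarith [h3]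

/-- For `1 ≤ y`, `2 * y * log y ≤ y^2 - 1` (i.e. `log y ≤ (y - 1/y)/2`). -/
lemma key_upper {y : ℝ} (hy1 : 1 ≤ y) :
    2 * y * Real.log y ≤ y ^ 2 - 1 := by
  have hy : 0 < y := lt_of_lt_of_le one_pos hy1
  have hlog : 0 ≤ Real.log y := Real.log_nonneg hy1
  have hs : Real.log y ≤ Real.sinh (Real.log y) := Real.self_le_sinh_iff.2 hlog
  rw [Real.sinh_log hy] at hs
  have h3 : y * Real.log y ≤ y * ((y - y⁻¹) / 2) :=
    mul_le_mul_of_nonneg_left hs hy.le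
  have hinv : y * y⁻¹ = 1 := mul_inv_cancel₀ hy.ne'
  nlinarith [h3]

theorem ln_inequality (x : ℝ) (hx0 : 0 ≤ x) (hx1 : x ≤ 0.04) :
    ((1 - 3 * x) / 2) * Real.log ((1 - 3 * x) / 2)
      + 2 * ((1 - 24 * x) / 5) * Real.log ((1 - 24 * x) / 5)
      > 3 * ((1 - 15 * x) / 4) * Real.log ((1 - 15 * x) / 4) := by
  have h1 : (0:ℝ) < 1 - 3 * x := by linarith
  have h2 : (0:ℝ) < 1 - 24 * x := by linarith
  have h3 : (0:ℝ) < 1 - 15 * x := by linarith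
  rw [Real.log_div h1.ne' (by norm_num), Real.log_div h2.ne' (by norm_num),
      Real.log_div h3.ne' (by norm_num)]
  have hlog4 : Real.log 4 = 2 * Real.log 2 := by
    rw [show (4:ℝ) = 2 ^ 2 by norm_num, Real.log_pow]; ring
  have hlog5 : Real.log 5 = 2 * Real.log 2 + Real.log (5/4) := by
    rw [← hlog4, ← Real.log_mul (by norm_num) (by norm_num)]; norm_num
  -- bound log(5/4)
  have h54 : Real.log (5/4) ≤ 0.225 := by
    have := key_upper (y := 5/4) (by norm_num)
    nlinarith [this]
  have hl2lo := Real.log_two_gt_d9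
  have hl2hi := Real.log_two_lt_d9
  -- lower bounds for the positive log terms
  have hA : (1 - 3*x) ^ 2 - 1 ≤ 2 * (1 - 3*x) * Real.log (1 - 3*x) :=
    key_lower h1 (by linarith)
  have hB : (1 - 24*x) ^ 2 - 1 ≤ 2 * (1 - 24*x) * Real.log (1 - 24*x) :=
    key_lower h2 (by linarith)
  -- upper bound for log(1-15x)
  have hC : Real.log (1 - 15*x) ≤ -15*x := by
    have := Real.log_le_sub_one_of_pos h3
    linarith
  have hC' : 3 * ((1 - 15*x)/4) * Real.log (1 - 15*x)
      ≤ 3 * ((1 - 15*x)/4) * (-15*x) :=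
    mul_le_mul_of_nonneg_left hC (by linarith)
  -- numeric bounds on logs with the right sign of coefficients
  have hK2 : (1 - 21*x) * (0.6931471803 : ℝ) ≤ (1 - 21*x) * Real.log 2 :=
    mul_le_mul_of_nonneg_left hl2lo.le (by linarith)
  have hl5 : Real.log 5 ≤ 1.6112943616 := by
    rw [hlog5]; nlinarith [h54, hl2hi]
  have hK5 : (2 * (1 - 24*x) / 5) * Real.log 5
      ≤ (2 * (1 - 24*x) / 5) * 1.6112943616 :=
    mul_le_mul_of_nonneg_left hl5 (by linarith)
  have hq : 0 ≤ x * (0.04 - x) := mul_nonneg hx0 (by linarith)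
  nlinarith [hA, hB, hC', hK2, hK5, hq]
end

section
/- For every real s with 0 ≤ s ≤ 1, one has −(ln 2)³/2^s + (ln 3)³/3^s − (ln 4)³/4^s + (ln 5)³/(2·5^s) > 0. -/
open Real

set_option maxHeartbeats 1000000

private lemma exp_ub5' {x : ℝ} (h0 : 0 ≤ x) (h1 : x ≤ 1) :
    Real.exp x ≤ 1 + x + x^2/2 + x^3/6 + x^4/24 + x^5/100 := by
  have h := Real.exp_bound' h0 h1 (n := 5) (by norm_num)
  have hs : (∑ m ∈ Finset.range 5, x ^ m / m.factorial)
      = 1 + x + x^2/2 + x^3/6 + x^4/24 := by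
    simp [Finset.sum_range_succ, Nat.factorial]
  rw [hs] at h
  norm_num [Nat.factorial] at h
  linarith

private lemma exp_lb4' {x : ℝ} (h0 : 0 ≤ x) :
    1 + x + x^2/2 + x^3/6 + x^4/24 ≤ Real.exp x := by
  have h := Real.sum_le_exp_of_nonneg h0 5
  have hs : (∑ m ∈ Finset.range 5, x ^ m / m.factorial)
      = 1 + x + x^2/2 + x^3/6 + x^4/24 := by
    simp [Finset.sum_range_succ, Nat.factorial]
  rw [hs] at h
  exact h

private lemma log3_lb' : (1.0980 : ℝ) < Real.log 3 := by
  rw [Real.lt_log_iff_exp_lt (by norm_num)]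
  have h : Real.exp (1.0980 : ℝ) = Real.exp 1 * Real.exp 0.098 := by
    rw [← Real.exp_add]; norm_num
  rw [h]
  have h1 := exp_ub5' (x := 0.098) (by norm_num) (by norm_num)
  nlinarith [Real.exp_one_lt_d9, Real.exp_pos (1:ℝ), Real.exp_pos (0.098:ℝ)]

private lemma log3_ub' : Real.log 3 < 1.0996 := by
  rw [Real.log_lt_iff_lt_exp (by norm_num)]
  have h : Real.exp (1.0996 : ℝ) = Real.exp 1 * Real.exp 0.0996 := by
    rw [← Real.exp_add]; norm_num
  rw [h]
  have h1 := Real.quadratic_le_exp_of_nonneg (x := 0.0996) (by norm_num)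
  nlinarith [Real.exp_one_gt_d9, Real.exp_pos (1:ℝ), Real.exp_pos (0.0996:ℝ)]

private lemma log5_lb' : (1.6090 : ℝ) < Real.log 5 := by
  rw [Real.lt_log_iff_exp_lt (by norm_num)]
  have key : Real.exp (1.6090 : ℝ) * Real.exp 0.391 = Real.exp 1 * Real.exp 1 := by
    rw [← Real.exp_add, ← Real.exp_add]; norm_num
  have h1 := exp_lb4' (x := 0.391) (by norm_num)
  nlinarith [Real.exp_one_lt_d9, Real.exp_pos (1.6090:ℝ), Real.exp_pos (1:ℝ),
    Real.exp_pos (0.391:ℝ)]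

private lemma log5_ub' : Real.log 5 < 1.6105 := by
  rw [Real.log_lt_iff_lt_exp (by norm_num)]
  have key : Real.exp (1.6105 : ℝ) * Real.exp 0.3895 = Real.exp 1 * Real.exp 1 := by
    rw [← Real.exp_add, ← Real.exp_add]; norm_num
  have h1 := exp_ub5' (x := 0.3895) (by norm_num) (by norm_num)
  nlinarith [Real.exp_one_gt_d9, Real.exp_pos (1.6105:ℝ), Real.exp_pos (1:ℝ),
    Real.exp_pos (0.3895:ℝ)]

private lemma cube_le' {x a : ℝ} (h0 : 0 ≤ x) (h : x ≤ a) : x^3 ≤ a^3 :=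
  pow_le_pow_left₀ h0 h 3

private lemma key_ineq (s L2 L3 L5 : ℝ) (hs0 : 0 ≤ s) (hs1 : s ≤ 1)
    (h2lb : (0.6931471803:ℝ) < L2) (h2ub : L2 < 0.6931471808)
    (h3lb : (1.0980:ℝ) < L3) (h3ub : L3 < 1.0996)
    (h5lb : (1.6090:ℝ) < L5) (h5ub : L5 < 1.6105) :
    0 < -(L2^3) * Real.exp (s*L2) + L3^3 * Real.exp (s*(2*L2-L3)) - 8*L2^3
      + L5^3/2 * Real.exp (-(s*(L5-2*L2))) := by
  -- coefficient bounds first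
  have hL2cub : L2^3 ≤ 0.33302466 := by
    calc L2^3 ≤ (0.6931471808:ℝ)^3 := cube_le' (by linarith) h2ub.le
    _ ≤ 0.33302466 := by norm_num
  have hL2cub0 : (0:ℝ) ≤ L2^3 := pow_nonneg (by linarith) 3
  have hL3cub : (1.32375:ℝ) ≤ L3^3 := by
    calc (1.32375:ℝ) ≤ (1.0980:ℝ)^3 := by norm_num
    _ ≤ L3^3 := cube_le' (by norm_num) h3lb.le
  have hL5cub : (4.1655094:ℝ) ≤ L5^3 := by
    calc (4.1655094:ℝ) ≤ (1.6090:ℝ)^3 := by norm_num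
    _ ≤ L5^3 := cube_le' (by norm_num) h5lb.le
  -- upper bound for exp (s*L2)
  have hx0 : 0 ≤ s * L2 := mul_nonneg hs0 (by linarith)
  have hM : s * L2 ≤ 0.6931471808 * s := by
    have := mul_le_mul_of_nonneg_left h2ub.le hs0
    linarith
  have hx1 : s * L2 ≤ 1 := by linarith
  have hA := exp_ub5' hx0 hx1
  have p2 := pow_le_pow_left₀ hx0 hM 2
  have p3 := pow_le_pow_left₀ hx0 hM 3
  have p4 := pow_le_pow_left₀ hx0 hM 4
  have p5 := pow_le_pow_left₀ hx0 hM 5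
  have hq2 : 0 ≤ s^2 := sq_nonneg s
  have hq3 : 0 ≤ s^3 := by positivity
  have hq4 : 0 ≤ s^4 := by positivity
  have hq5 : 0 ≤ s^5 := by positivity
  have hE2 : Real.exp (s*L2) ≤ 1 + 0.69314719*s + 0.24022651*s^2 + 0.05550411*s^3
      + 0.00961813*s^4 + 0.00160003*s^5 := by
    nlinarith [p2, p3, p4, p5, hA, hq2, hq3, hq4, hq5]
  -- lower bound for exp (s*(2*L2-L3))
  have hB1 := Real.add_one_le_exp (s*(2*L2-L3)/2)
  have hBsq : Real.exp (s*(2*L2-L3)/2) ^ 2 = Real.exp (s*(2*L2-L3)) := by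
    rw [sq, ← Real.exp_add]; ring_nf
  have hstepB : 1 + 0.1433471*s ≤ Real.exp (s*(2*L2-L3)/2) := by
    have h := mul_le_mul_of_nonneg_left (show (0.2866942:ℝ) ≤ 2*L2-L3 by linarith) hs0
    linarith
  have hposB : (0:ℝ) ≤ 1 + 0.1433471*s := by linarith
  have hEB : (1 + 0.1433471*s)^2 ≤ Real.exp (s*(2*L2-L3)) := by
    rw [← hBsq]; exact pow_le_pow_left₀ hposB hstepB 2
  -- lower bound for exp (-(s*(L5-2*L2)))
  have hu1 := Real.add_one_le_exp (-(s*(L5-2*L2))/2)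
  have hCsq : Real.exp (-(s*(L5-2*L2))/2) ^ 2 = Real.exp (-(s*(L5-2*L2))) := by
    rw [sq, ← Real.exp_add]; ring_nf
  have hstepC : 1 - 0.1121029*s ≤ Real.exp (-(s*(L5-2*L2))/2) := by
    have h := mul_le_mul_of_nonneg_left (show L5-2*L2 ≤ (0.2242058:ℝ) by linarith) hs0
    linarith
  have hposC : (0:ℝ) ≤ 1 - 0.1121029*s := by linarith
  have hEC : (1 - 0.1121029*s)^2 ≤ Real.exp (-(s*(L5-2*L2))) := by
    rw [← hCsq]; exact pow_le_pow_left₀ hposC hstepC 2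
  -- combine
  have t1 : L2^3 * Real.exp (s*L2) ≤ 0.33302466 * (1 + 0.69314719*s + 0.24022651*s^2
      + 0.05550411*s^3 + 0.00961813*s^4 + 0.00160003*s^5) :=
    mul_le_mul hL2cub hE2 (Real.exp_pos _).le (by norm_num)
  have t2 : 1.32375 * (1 + 0.1433471*s)^2 ≤ L3^3 * Real.exp (s*(2*L2-L3)) :=
    mul_le_mul hL3cub hEB (sq_nonneg _) (by linarith)
  have t3 : 2.0827547 * (1 - 0.1121029*s)^2 ≤ L5^3/2 * Real.exp (-(s*(L5-2*L2))) :=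
    mul_le_mul (by linarith) hEC (sq_nonneg _) (by linarith)
  have hp2 : s^2 ≤ 1 := pow_le_one₀ hs0 hs1
  have hp3 : s^3 ≤ 1 := pow_le_one₀ hs0 hs1
  have hp4 : s^4 ≤ 1 := pow_le_one₀ hs0 hs1
  have hp5 : s^5 ≤ 1 := pow_le_one₀ hs0 hs1
  nlinarith [t1, t2, t3, hL2cub, hp2, hp3, hp4, hp5, hs1, hs0]

theorem dirichlet_inequality (s : ℝ) (hs0 : 0 ≤ s) (hs1 : s ≤ 1) :
    -(Real.log 2) ^ 3 / (2 : ℝ) ^ s + (Real.log 3) ^ 3 / (3 : ℝ) ^ s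
      - (Real.log 4) ^ 3 / (4 : ℝ) ^ s + (Real.log 5) ^ 3 / (2 * (5 : ℝ) ^ s) > 0 := by
  have hlog4 : Real.log 4 = 2 * Real.log 2 := by
    rw [show (4:ℝ) = 2^2 by norm_num, Real.log_pow]
    push_cast; ring
  have h2 : (2:ℝ)^s = Real.exp (s * Real.log 2) := by
    rw [Real.rpow_def_of_pos (by norm_num), mul_comm]
  have h3 : (3:ℝ)^s = Real.exp (s * Real.log 3) := by
    rw [Real.rpow_def_of_pos (by norm_num), mul_comm]
  have h4 : (4:ℝ)^s = Real.exp (s * (2 * Real.log 2)) := by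
    rw [Real.rpow_def_of_pos (by norm_num), hlog4, mul_comm]
  have h5 : (5:ℝ)^s = Real.exp (s * Real.log 5) := by
    rw [Real.rpow_def_of_pos (by norm_num), mul_comm]
  rw [h2, h3, h4, h5, hlog4]
  set L2 := Real.log 2
  set L3 := Real.log 3
  set L5 := Real.log 5
  have hkey := key_ineq s L2 L3 L5 hs0 hs1 Real.log_two_gt_d9 Real.log_two_lt_d9
    log3_lb' log3_ub' log5_lb' log5_ub'
  have e2 := Real.exp_pos (s*L2)
  have e3 := Real.exp_pos (s*L3)
  have e5 := Real.exp_pos (s*L5)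
  have hB : Real.exp (s*(2*L2-L3)) = Real.exp (s*(2*L2)) / Real.exp (s*L3) := by
    rw [← Real.exp_sub]; ring_nf
  have hC : Real.exp (-(s*(L5-2*L2))) = Real.exp (s*(2*L2)) / Real.exp (s*L5) := by
    rw [← Real.exp_sub]; ring_nf
  have h4e : Real.exp (s*(2*L2)) = Real.exp (s*L2) ^ 2 := by
    rw [sq, ← Real.exp_add]; ring_nf
  rw [hB, hC, h4e] at hkey
  have heq : -L2 ^ 3 / Real.exp (s*L2) + L3 ^ 3 / Real.exp (s*L3)
      - (2*L2) ^ 3 / Real.exp (s*(2*L2)) + L5 ^ 3 / (2 * Real.exp (s*L5))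
      = (-(L2^3) * Real.exp (s*L2) + L3^3 * (Real.exp (s*L2)^2 / Real.exp (s*L3)) - 8*L2^3
        + L5^3/2 * (Real.exp (s*L2)^2 / Real.exp (s*L5))) / Real.exp (s*L2) ^ 2 := by
    rw [h4e]
    field_simp
    ring
  rw [gt_iff_lt, heq]
  exact div_pos hkey (pow_pos e2 2)
end

section
/- The function g₁(x) = ((1−3x)/2)·ln((1−3x)/2) + 2·((1−24x)/5)·ln((1−24x)/5) is strictly increasing on the interval [0, 0.04]. -/
theorem g1_strictMonoOn :
    StrictMonoOn (fun x : ℝ =>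
      ((1 - 3 * x) / 2) * Real.log ((1 - 3 * x) / 2)
        + 2 * ((1 - 24 * x) / 5) * Real.log ((1 - 24 * x) / 5))
      (Set.Icc 0 0.04) := by
  apply strictMonoOn_of_deriv_pos (convex_Icc _ _)
  · apply ContinuousOn.add
    · apply ContinuousOn.mul (by fun_prop)
      apply ContinuousOn.log (by fun_prop)
      intro x hx
      simp only [Set.mem_Icc] at hx
      have := hx.2
      norm_num at this ⊢
      nlinarith
    · apply ContinuousOn.mul (by fun_prop)
      apply ContinuousOn.log (by fun_prop)
      intro x hx
      simp only [Set.mem_Icc] at hx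
      have := hx.2
      norm_num at this ⊢
      nlinarith
  · intro x hx
    rw [interior_Icc] at hx
    obtain ⟨hx0, hx1⟩ := hx
    have hx1' : x < 1/25 := by norm_num at hx1; linarith
    have hu : (0:ℝ) < (1 - 3*x)/2 := by nlinarith
    have hv : (0:ℝ) < (1 - 24*x)/5 := by nlinarith
    have h1 : HasDerivAt (fun x : ℝ => (1 - 3*x)/2) (-3/2) x := by
      have h := ((hasDerivAt_id x).const_mul (3:ℝ))
      have h2 := ((hasDerivAt_const x (1:ℝ)).sub h).div_const 2
      exact h2.congr_deriv (by norm_num)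
    have h2 : HasDerivAt (fun x : ℝ => (1 - 24*x)/5) (-24/5) x := by
      have h := ((hasDerivAt_id x).const_mul (24:ℝ))
      have h2 := ((hasDerivAt_const x (1:ℝ)).sub h).div_const 5
      exact h2.congr_deriv (by norm_num)
    have hl1 : HasDerivAt (fun x : ℝ => Real.log ((1 - 3*x)/2))
        (((1 - 3*x)/2)⁻¹ * (-3/2)) x := by
      have := (Real.hasDerivAt_log hu.ne').comp x h1; exact this
    have hl2 : HasDerivAt (fun x : ℝ => Real.log ((1 - 24*x)/5))
        (((1 - 24*x)/5)⁻¹ * (-24/5)) x := by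
      have := (Real.hasDerivAt_log hv.ne').comp x h2; exact this
    have hm : HasDerivAt (fun x : ℝ => 2 * ((1 - 24*x)/5)) (2 * (-24/5)) x :=
      h2.const_mul 2
    have hd := (h1.mul hl1).add (hm.mul hl2)
    have hval : -3/2 * Real.log ((1 - 3*x)/2)
          + (1 - 3*x)/2 * (((1 - 3*x)/2)⁻¹ * (-3/2))
        + (2 * (-24/5) * Real.log ((1 - 24*x)/5)
          + 2 * ((1 - 24*x)/5) * (((1 - 24*x)/5)⁻¹ * (-24/5)))
        = -3/2 * Real.log ((1 - 3*x)/2) - 3/2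
          + (-48/5 * Real.log ((1 - 24*x)/5) - 48/5) := by
      have k1 : (1 - 3*x)/2 * (((1 - 3*x)/2)⁻¹ * (-3/2)) = -3/2 := by
        rw [← mul_assoc, mul_inv_cancel₀ hu.ne', one_mul]
      have k2 : 2 * ((1 - 24*x)/5) * (((1 - 24*x)/5)⁻¹ * (-24/5)) = -48/5 := by
        rw [mul_assoc, ← mul_assoc ((1 - 24*x)/5), mul_inv_cancel₀ hv.ne', one_mul]
        norm_num
      rw [k1, k2]
      ring
    erw [hd.deriv, hval]
    have hlu : Real.log ((1 - 3*x)/2) ≤ Real.log (1/2) :=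
      Real.log_le_log hu (by nlinarith)
    have hlv : Real.log ((1 - 24*x)/5) ≤ Real.log (1/4) :=
      Real.log_le_log hv (by nlinarith)
    have e1 : Real.log (1/2) = -Real.log 2 := by
      rw [Real.log_div one_ne_zero (by norm_num), Real.log_one]; ring
    have e2 : Real.log (1/4) = -(2 * Real.log 2) := by
      rw [Real.log_div one_ne_zero (by norm_num), Real.log_one,
        show (4:ℝ) = 2^2 by norm_num, Real.log_pow]
      push_cast; ring
    have hlog2 := Real.log_two_gt_d9
    nlinarith [hlu, hlv]
end

section
/- Let g₁(x) = ((1−3x)/2)·ln((1−3x)/2) + 2·((1−24x)/5)·ln((1−24x)/5) and g₂(x) = 3·((1−15x)/4)·ln((1−15x)/4). Then the sequence τ = (0, 0.009, 0.014, 0.022, 0.03, 0.04) is a valid DIF certificate: g₂(τ_{i+1}) < g₁(τ_i) holds for all i = 1, …, 5; that is, g₂(0.009) < g₁(0), g₂(0.014) < g₁(0.009), g₂(0.022) < g₁(0.014), g₂(0.03) < g₁(0.022), and g₂(0.04) < g₁(0.03). -/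
lemma log_lt_of_pow (r a : ℝ) (m n : ℕ) (hr : 0 < r) (hn : 0 < n)
    (h : r ^ n * 2.7182818286 ^ m < 1) (ha : -((m : ℝ) / n) ≤ a) :
    Real.log r < a := by
  have he : Real.exp 1 < 2.7182818286 := Real.exp_one_lt_d9
  have hrn : (0:ℝ) < r ^ n := pow_pos hr n
  have hexp : Real.exp 1 ^ m ≤ (2.7182818286 : ℝ) ^ m :=
    pow_le_pow_left₀ (Real.exp_pos 1).le he.le m
  have key : r ^ n * Real.exp 1 ^ m < 1 :=
    lt_of_le_of_lt (by nlinarith [hexp, hrn.le]) h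
  refine lt_of_lt_of_le ?_ ha
  rw [Real.log_lt_iff_lt_exp hr]
  have hne : (n : ℝ) ≠ 0 := Nat.cast_ne_zero.mpr hn.ne'
  have hpos : (0:ℝ) < Real.exp 1 ^ m := pow_pos (Real.exp_pos 1) m
  have hem : Real.exp (m:ℝ) = Real.exp 1 ^ m := by rw [← Real.exp_nat_mul, mul_one]
  have hpow : r ^ n < Real.exp (-((m : ℝ) / n)) ^ n := by
    rw [← Real.exp_nat_mul]
    have h2 : (n : ℝ) * -((m : ℝ) / n) = -(m : ℝ) := by field_simp
    rw [h2, Real.exp_neg, hem, inv_eq_one_div, lt_div_iff₀ hpos]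
    exact key
  exact lt_of_pow_lt_pow_left₀ n (Real.exp_pos _).le hpow

lemma lt_log_of_pow (r a : ℝ) (m n : ℕ) (hr : 0 < r) (hn : 0 < n)
    (h : 1 < r ^ n * 2.7182818283 ^ m) (ha : a ≤ -((m : ℝ) / n)) :
    a < Real.log r := by
  have he : (2.7182818283 : ℝ) < Real.exp 1 := Real.exp_one_gt_d9
  have hrn : (0:ℝ) < r ^ n := pow_pos hr n
  have hexp : (2.7182818283 : ℝ) ^ m ≤ Real.exp 1 ^ m :=
    pow_le_pow_left₀ (by norm_num) he.le m
  have key : 1 < r ^ n * Real.exp 1 ^ m :=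
    lt_of_lt_of_le h (by nlinarith [hexp, hrn.le])
  refine lt_of_le_of_lt ha ?_
  rw [Real.lt_log_iff_exp_lt hr]
  have hne : (n : ℝ) ≠ 0 := Nat.cast_ne_zero.mpr hn.ne'
  have hpos : (0:ℝ) < Real.exp 1 ^ m := pow_pos (Real.exp_pos 1) m
  have hem : Real.exp (m:ℝ) = Real.exp 1 ^ m := by rw [← Real.exp_nat_mul, mul_one]
  have hpow : Real.exp (-((m : ℝ) / n)) ^ n < r ^ n := by
    rw [← Real.exp_nat_mul]
    have h2 : (n : ℝ) * -((m : ℝ) / n) = -(m : ℝ) := by field_simp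
    rw [h2, Real.exp_neg, hem, inv_eq_one_div, div_lt_iff₀ hpos]
    linarith [key]
  exact lt_of_pow_lt_pow_left₀ n hr.le hpow

lemma key_step (C A B uC lA lB : ℝ) (hC : 0 < C) (hA : 0 < A) (hB : 0 < B)
    (h1 : Real.log C < uC) (h2 : lA < Real.log A) (h3 : lB < Real.log B)
    (h4 : 3 * C * uC <= A * lA + 2 * B * lB) :
    3 * C * Real.log C < A * Real.log A + 2 * B * Real.log B := by
  nlinarith [mul_lt_mul_of_pos_left h1 hC, mul_lt_mul_of_pos_left h2 hA,
    mul_lt_mul_of_pos_left h3 hB]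

theorem dif_certificate_ln :
    let g₁ : ℝ → ℝ := fun x =>
      ((1 - 3 * x) / 2) * Real.log ((1 - 3 * x) / 2)
        + 2 * ((1 - 24 * x) / 5) * Real.log ((1 - 24 * x) / 5)
    let g₂ : ℝ → ℝ := fun x => 3 * ((1 - 15 * x) / 4) * Real.log ((1 - 15 * x) / 4)
    g₂ 0.009 < g₁ 0 ∧ g₂ 0.014 < g₁ 0.009 ∧ g₂ 0.022 < g₁ 0.014 ∧
      g₂ 0.03 < g₁ 0.022 ∧ g₂ 0.04 < g₁ 0.03 := by
  intro g₁ g₂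
  refine ⟨?_, ?_, ?_, ?_, ?_⟩
  · show 3 * ((1 - 15 * (0.009:ℝ)) / 4) * Real.log ((1 - 15 * (0.009:ℝ)) / 4) <
        ((1 - 3 * (0:ℝ)) / 2) * Real.log ((1 - 3 * (0:ℝ)) / 2)
          + 2 * ((1 - 24 * (0:ℝ)) / 5) * Real.log ((1 - 24 * (0:ℝ)) / 5)
    refine key_step _ _ _ (-((49:ℝ)/32)) (-((43:ℝ)/62)) (-((66:ℝ)/41))
      (by norm_num) (by norm_num) (by norm_num) ?_ ?_ ?_ (by norm_num)
    · exact log_lt_of_pow _ _ 49 32 (by norm_num) (by norm_num) (by norm_num) (by norm_num)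
    · exact lt_log_of_pow _ _ 43 62 (by norm_num) (by norm_num) (by norm_num) (by norm_num)
    · exact lt_log_of_pow _ _ 66 41 (by norm_num) (by norm_num) (by norm_num) (by norm_num)
  · show 3 * ((1 - 15 * (0.014:ℝ)) / 4) * Real.log ((1 - 15 * (0.014:ℝ)) / 4) <
        ((1 - 3 * (0.009:ℝ)) / 2) * Real.log ((1 - 3 * (0.009:ℝ)) / 2)
          + 2 * ((1 - 24 * (0.009:ℝ)) / 5) * Real.log ((1 - 24 * (0.009:ℝ)) / 5)
    refine key_step _ _ _ (-((60:ℝ)/37)) (-((31:ℝ)/43)) (-((63:ℝ)/34))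
      (by norm_num) (by norm_num) (by norm_num) ?_ ?_ ?_ (by norm_num)
    · exact log_lt_of_pow _ _ 60 37 (by norm_num) (by norm_num) (by norm_num) (by norm_num)
    · exact lt_log_of_pow _ _ 31 43 (by norm_num) (by norm_num) (by norm_num) (by norm_num)
    · exact lt_log_of_pow _ _ 63 34 (by norm_num) (by norm_num) (by norm_num) (by norm_num)
  · show 3 * ((1 - 15 * (0.022:ℝ)) / 4) * Real.log ((1 - 15 * (0.022:ℝ)) / 4) <
        ((1 - 3 * (0.014:ℝ)) / 2) * Real.log ((1 - 3 * (0.014:ℝ)) / 2)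
          + 2 * ((1 - 24 * (0.014:ℝ)) / 5) * Real.log ((1 - 24 * (0.014:ℝ)) / 5)
    refine key_step _ _ _ (-((134:ℝ)/75)) (-((53:ℝ)/72)) (-((105:ℝ)/52))
      (by norm_num) (by norm_num) (by norm_num) ?_ ?_ ?_ (by norm_num)
    · exact log_lt_of_pow _ _ 134 75 (by norm_num) (by norm_num) (by norm_num) (by norm_num)
    · exact lt_log_of_pow _ _ 53 72 (by norm_num) (by norm_num) (by norm_num) (by norm_num)
    · exact lt_log_of_pow _ _ 105 52 (by norm_num) (by norm_num) (by norm_num) (by norm_num)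
  · show 3 * ((1 - 15 * (0.03:ℝ)) / 4) * Real.log ((1 - 15 * (0.03:ℝ)) / 4) <
        ((1 - 3 * (0.022:ℝ)) / 2) * Real.log ((1 - 3 * (0.022:ℝ)) / 2)
          + 2 * ((1 - 24 * (0.022:ℝ)) / 5) * Real.log ((1 - 24 * (0.022:ℝ)) / 5)
    refine key_step _ _ _ (-((123:ℝ)/62)) (-((16:ℝ)/21)) (-((144:ℝ)/61))
      (by norm_num) (by norm_num) (by norm_num) ?_ ?_ ?_ (by norm_num)
    · exact log_lt_of_pow _ _ 123 62 (by norm_num) (by norm_num) (by norm_num) (by norm_num)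
    · exact lt_log_of_pow _ _ 16 21 (by norm_num) (by norm_num) (by norm_num) (by norm_num)
    · exact lt_log_of_pow _ _ 144 61 (by norm_num) (by norm_num) (by norm_num) (by norm_num)
  · show 3 * ((1 - 15 * (0.04:ℝ)) / 4) * Real.log ((1 - 15 * (0.04:ℝ)) / 4) <
        ((1 - 3 * (0.03:ℝ)) / 2) * Real.log ((1 - 3 * (0.03:ℝ)) / 2)
          + 2 * ((1 - 24 * (0.03:ℝ)) / 5) * Real.log ((1 - 24 * (0.03:ℝ)) / 5)
    refine key_step _ _ _ (-((99:ℝ)/43)) (-((26:ℝ)/33)) (-((320:ℝ)/111))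
      (by norm_num) (by norm_num) (by norm_num) ?_ ?_ ?_ (by norm_num)
    · exact log_lt_of_pow _ _ 99 43 (by norm_num) (by norm_num) (by norm_num) (by norm_num)
    · exact lt_log_of_pow _ _ 26 33 (by norm_num) (by norm_num) (by norm_num) (by norm_num)
    · exact lt_log_of_pow _ _ 320 111 (by norm_num) (by norm_num)
        (by rw [show (320:ℕ) = 160 * 2 from rfl, pow_mul]; norm_num) (by norm_num)
end

section
/- Let g₁(x) = ((1−3x)/2)·ln((1−3x)/2) + 2·((1−24x)/5)·ln((1−24x)/5) and g₂(x) = 3·((1−15x)/4)·ln((1−15x)/4). Then the uniformly spaced sequence τ_k = 0.005·(k−1) for k = 1, …, 9 (i.e., 0, 0.005, 0.01, …, 0.04) is a valid DIF certificate: g₂(τ_{k+1}) < g₁(τ_k) for all k = 1, …, 8. -/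
lemma log_rat_bounds (r x e lo hi : ℝ) (n : ℕ)
    (hr : 1 - x = r * 2 ^ n)
    (hax : |x| ≤ e)
    (he : e ≤ 1/2)
    (hrpos : 0 < r)
    (hlo : lo ≤ -(x + x^2/2 + x^3/3 + x^4/4 + x^5/5 + x^6/6 + x^7/7) - 2*e^8 - n * 0.6931471808)
    (hhi : -(x + x^2/2 + x^3/3 + x^4/4 + x^5/5 + x^6/6 + x^7/7) + 2*e^8 - n * 0.6931471803 ≤ hi) :
    lo ≤ Real.log r ∧ Real.log r ≤ hi := by
  have hx : |x| ≤ 1/2 := le_trans hax he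
  have h1 : |x| < 1 := lt_of_le_of_lt hx (by norm_num)
  have key := Real.abs_log_sub_add_sum_range_le h1 7
  have key2 : |(x + x^2/2 + x^3/3 + x^4/4 + x^5/5 + x^6/6 + x^7/7) + Real.log (1-x)| ≤ |x|^8/(1-|x|) := by
    convert key using 3
    simp [Finset.sum_range_succ]
    ring
  have hpow : |x|^8 ≤ e^8 := pow_le_pow_left₀ (abs_nonneg x) hax 8
  have hE : |x|^8/(1-|x|) ≤ 2*e^8 := by
    rw [div_le_iff₀ (by linarith)]
    nlinarith [pow_nonneg (abs_nonneg x) 8, abs_nonneg x]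
  have habs := abs_le.mp key2
  have hlog : Real.log (1-x) = Real.log r + n * Real.log 2 := by
    rw [hr, Real.log_mul (ne_of_gt hrpos) (by positivity), Real.log_pow]
  have hn : (0:ℝ) ≤ (n:ℝ) := Nat.cast_nonneg n
  have l2a := Real.log_two_gt_d9
  have l2b := Real.log_two_lt_d9
  have m1 : (n:ℝ) * Real.log 2 ≤ (n:ℝ) * 0.6931471808 :=
    mul_le_mul_of_nonneg_left l2b.le hn
  have m2 : (n:ℝ) * 0.6931471803 ≤ (n:ℝ) * Real.log 2 :=
    mul_le_mul_of_nonneg_left l2a.le hn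
  constructor <;> linarith [habs.1, habs.2]

theorem dif_certificate_ln_uniform :
    let g₁ : ℝ → ℝ := fun x =>
      ((1 - 3 * x) / 2) * Real.log ((1 - 3 * x) / 2)
        + 2 * ((1 - 24 * x) / 5) * Real.log ((1 - 24 * x) / 5)
    let g₂ : ℝ → ℝ := fun x => 3 * ((1 - 15 * x) / 4) * Real.log ((1 - 15 * x) / 4)
    ∀ k : ℕ, 1 ≤ k → k ≤ 8 →
      g₂ (0.005 * k) < g₁ (0.005 * ((k : ℝ) - 1)) := by
  intro g₁ g₂ k hk1 hk8
  simp only [g₁, g₂]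
  interval_cases k <;> norm_num
  · -- k = 1
    obtain ⟨ha1, ha2⟩ := log_rat_bounds (1/2 : ℝ) (0 : ℝ) (0 : ℝ) (-108304247/156250000 : ℝ) (-6931471803/10000000000 : ℝ) 1 (by norm_num) (by rw [abs_le]; constructor <;> norm_num) (by norm_num) (by norm_num) (by norm_num) (by norm_num)
    obtain ⟨hb1, hb2⟩ := log_rat_bounds (1/5 : ℝ) (1/5 : ℝ) (1/5 : ℝ) (-2640491837/1640625000 : ℝ) (-168990402263/105000000000 : ℝ) 2 (by norm_num) (by rw [abs_le]; constructor <;> norm_num) (by norm_num) (by norm_num) (by norm_num) (by norm_num)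
    obtain ⟨hc1, hc2⟩ := log_rat_bounds (37/160 : ℝ) (3/40 : ℝ) (3/40 : ℝ) (-839662906127579/573440000000000 : ℝ) (-839662903257789/573440000000000 : ℝ) 2 (by norm_num) (by rw [abs_le]; constructor <;> norm_num) (by norm_num) (by norm_num) (by norm_num) (by norm_num)
    linarith
  · -- k = 2
    obtain ⟨ha1, ha2⟩ := log_rat_bounds (197/400 : ℝ) (3/200 : ℝ) (3/200 : ℝ) (-6346016934746074627/8960000000000000000 : ℝ) (-6346016930265982773/8960000000000000000 : ℝ) 1 (by norm_num) (by rw [abs_le]; constructor <;> norm_num) (by norm_num) (by norm_num) (by norm_num) (by norm_num)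
    obtain ⟨hb1, hb2⟩ := log_rat_bounds (22/125 : ℝ) (37/125 : ℝ) (37/125 : ℝ) (-17397385490282244581/10013580322265625000 : ℝ) (-1113281606020840278191/640869140625000000000 : ℝ) 2 (by norm_num) (by rw [abs_le]; constructor <;> norm_num) (by norm_num) (by norm_num) (by norm_num) (by norm_num)
    obtain ⟨hc1, hc2⟩ := log_rat_bounds (17/80 : ℝ) (3/20 : ℝ) (3/20 : ℝ) (-3469342837409/2240000000000 : ℝ) (-3469340538819/2240000000000 : ℝ) 2 (by norm_num) (by rw [abs_le]; constructor <;> norm_num) (by norm_num) (by norm_num) (by norm_num) (by norm_num)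
    linarith
  · -- k = 3
    obtain ⟨ha1, ha2⟩ := log_rat_bounds (97/200 : ℝ) (3/100 : ℝ) (3/100 : ℝ) (-25326223590007777/35000000000000000 : ℝ) (-25326223572415923/35000000000000000 : ℝ) 1 (by norm_num) (by rw [abs_le]; constructor <;> norm_num) (by norm_num) (by norm_num) (by norm_num) (by norm_num)
    obtain ⟨hb1, hb2⟩ := log_rat_bounds (19/125 : ℝ) (-27/125 : ℝ) (27/125 : ℝ) (-12576280755914500119/6675720214843750000 : ℝ) (-804873869917988883759/427246093750000000000 : ℝ) 3 (by norm_num) (by rw [abs_le]; constructor <;> norm_num) (by norm_num) (by norm_num) (by norm_num) (by norm_num)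
    obtain ⟨hc1, hc2⟩ := log_rat_bounds (31/160 : ℝ) (9/40 : ℝ) (9/40 : ℝ) (-941128994546579/573440000000000 : ℝ) (-941113927620789/573440000000000 : ℝ) 2 (by norm_num) (by rw [abs_le]; constructor <;> norm_num) (by norm_num) (by norm_num) (by norm_num) (by norm_num)
    linarith
  · -- k = 4
    obtain ⟨ha1, ha2⟩ := log_rat_bounds (191/400 : ℝ) (9/200 : ℝ) (9/200 : ℝ) (-6623152429222313947/8960000000000000000 : ℝ) (-6623152424139659853/8960000000000000000 : ℝ) 1 (by norm_num) (by rw [abs_le]; constructor <;> norm_num) (by norm_num) (by norm_num) (by norm_num) (by norm_num)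
    obtain ⟨hb1, hb2⟩ := log_rat_bounds (16/125 : ℝ) (-3/125 : ℝ) (3/125 : ℝ) (-13723445044021830039/6675720214843750000 : ℝ) (-878300482176339864879/427246093750000000000 : ℝ) 3 (by norm_num) (by rw [abs_le]; constructor <;> norm_num) (by norm_num) (by norm_num) (by norm_num) (by norm_num)
    obtain ⟨hc1, hc2⟩ := log_rat_bounds (7/40 : ℝ) (3/10 : ℝ) (3/10 : ℝ) (-15252031589/8750000000 : ℝ) (-60998940921/35000000000 : ℝ) 2 (by norm_num) (by rw [abs_le]; constructor <;> norm_num) (by norm_num) (by norm_num) (by norm_num) (by norm_num)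
    linarith
  · -- k = 5
    obtain ⟨ha1, ha2⟩ := log_rat_bounds (47/100 : ℝ) (3/50 : ℝ) (3/50 : ℝ) (-103225744019977/136718750000000 : ℝ) (-825805950878109/1093750000000000 : ℝ) 1 (by norm_num) (by rw [abs_le]; constructor <;> norm_num) (by norm_num) (by norm_num) (by norm_num) (by norm_num)
    obtain ⟨hb1, hb2⟩ := log_rat_bounds (13/125 : ℝ) (21/125 : ℝ) (21/125 : ℝ) (-2158513599782616177/953674316406250000 : ℝ) (-138144715372102758297/61035156250000000000 : ℝ) 3 (by norm_num) (by rw [abs_le]; constructor <;> norm_num) (by norm_num) (by norm_num) (by norm_num) (by norm_num)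
    obtain ⟨hc1, hc2⟩ := log_rat_bounds (5/32 : ℝ) (-1/4 : ℝ) (1/4 : ℝ) (-12474517086803/6720000000000 : ℝ) (-12474106920473/6720000000000 : ℝ) 3 (by norm_num) (by rw [abs_le]; constructor <;> norm_num) (by norm_num) (by norm_num) (by norm_num) (by norm_num)
    linarith
  · -- k = 6
    obtain ⟨ha1, ha2⟩ := log_rat_bounds (37/80 : ℝ) (3/40 : ℝ) (3/40 : ℝ) (-442184586769627/573440000000000 : ℝ) (-442184584186557/573440000000000 : ℝ) 1 (by norm_num) (by rw [abs_le]; constructor <;> norm_num) (by norm_num) (by norm_num) (by norm_num) (by norm_num)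
    obtain ⟨hb1, hb2⟩ := log_rat_bounds (2/25 : ℝ) (-7/25 : ℝ) (7/25 : ℝ) (-1156219675756/457763671875 : ℝ) (-295974527290489/117187500000000 : ℝ) 4 (by norm_num) (by rw [abs_le]; constructor <;> norm_num) (by norm_num) (by norm_num) (by norm_num) (by norm_num)
    obtain ⟨hc1, hc2⟩ := log_rat_bounds (11/80 : ℝ) (-1/10 : ℝ) (1/10 : ℝ) (-52083448763/26250000000 : ℝ) (-416667581389/210000000000 : ℝ) 3 (by norm_num) (by rw [abs_le]; constructor <;> norm_num) (by norm_num) (by norm_num) (by norm_num) (by norm_num)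
    linarith
  · -- k = 7
    obtain ⟨ha1, ha2⟩ := log_rat_bounds (91/200 : ℝ) (9/100 : ℝ) (9/100 : ℝ) (-27561025390347997/35000000000000000 : ℝ) (-27561024770193903/35000000000000000 : ℝ) 1 (by norm_num) (by rw [abs_le]; constructor <;> norm_num) (by norm_num) (by norm_num) (by norm_num) (by norm_num)
    obtain ⟨hb1, hb2⟩ := log_rat_bounds (7/125 : ℝ) (13/125 : ℝ) (13/125 : ℝ) (-3607897514615118532/1251697540283203125 : ℝ) (-923621745559127779183/320434570312500000000 : ℝ) 4 (by norm_num) (by rw [abs_le]; constructor <;> norm_num) (by norm_num) (by norm_num) (by norm_num) (by norm_num)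
    obtain ⟨hc1, hc2⟩ := log_rat_bounds (19/160 : ℝ) (1/20 : ℝ) (1/20 : ℝ) (-14318538103703/6720000000000 : ℝ) (-14318538092573/6720000000000 : ℝ) 3 (by norm_num) (by rw [abs_le]; constructor <;> norm_num) (by norm_num) (by norm_num) (by norm_num) (by norm_num)
    linarith
  · -- k = 8
    obtain ⟨ha1, ha2⟩ := log_rat_bounds (179/400 : ℝ) (21/200 : ℝ) (21/200 : ℝ) (-1029220824344565661/1280000000000000000 : ℝ) (-1029220748058846939/1280000000000000000 : ℝ) 1 (by norm_num) (by rw [abs_le]; constructor <;> norm_num) (by norm_num) (by norm_num) (by norm_num) (by norm_num)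
    obtain ⟨hb1, hb2⟩ := log_rat_bounds (4/125 : ℝ) (-3/125 : ℝ) (3/125 : ℝ) (-22977958337478861289/6675720214843750000 : ℝ) (-1470589332530343771129/427246093750000000000 : ℝ) 5 (by norm_num) (by rw [abs_le]; constructor <;> norm_num) (by norm_num) (by norm_num) (by norm_num) (by norm_num)
    obtain ⟨hc1, hc2⟩ := log_rat_bounds (1/10 : ℝ) (1/5 : ℝ) (1/5 : ℝ) (-7555372861/3281250000 : ℝ) (-483541712389/210000000000 : ℝ) 3 (by norm_num) (by rw [abs_le]; constructor <;> norm_num) (by norm_num) (by norm_num) (by norm_num) (by norm_num)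
    linarith
end
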